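/- Theorem 1(ii): Every PPT entangled state can be decomposed into a separable part and an edge part. Precisely, let ρ be a matrix on ℂᵐ⊗ℂⁿ of trace 1 that is positive semidefinite, has positive semidefinite partial transpose, and is not separable. Then there exist p ∈ (0,1], a separable matrix ρ_sep of trace 1, and a matrix δ of trace 1 such that δ is positive semidefinite, δ^{T_B} is positive semidefinite, δ strongly violates the range criterion, and ρ = (1−p)·ρ_sep + p·δ. -/

import Mathlib

open Matrix ComplexOrder

variable {m n : ℕ}

/-- The partial transpose on the second factor: `(ρ^{T_B})_{(i,j),(k,l)} = ρ_{(i,l),(k,j)}`. -/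
noncomputable def ptrans (ρ : Matrix (Fin m × Fin n) (Fin m × Fin n) ℂ) :
    Matrix (Fin m × Fin n) (Fin m × Fin n) ℂ :=
  fun p q => ρ (p.1, q.2) (q.1, p.2)

/-- The product vector `a ⊗ b ∈ ℂᵐ ⊗ ℂⁿ`, with `(i,j)`-th component `a i * b j`. -/
def prodVec (a : Fin m → ℂ) (b : Fin n → ℂ) : Fin m × Fin n → ℂ := fun p => a p.1 * b p.2

/-- A matrix on `ℂᵐ ⊗ ℂⁿ` is separable if it is a finite sum of outer products
`w w†` of product vectors `w = a ⊗ b`. -/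
noncomputable def IsSeparableState (ρ : Matrix (Fin m × Fin n) (Fin m × Fin n) ℂ) : Prop :=
  ∃ (k : ℕ) (a : Fin k → Fin m → ℂ) (b : Fin k → Fin n → ℂ),
    ρ = ∑ i : Fin k,
      Matrix.vecMulVec (prodVec (a i) (b i)) (fun q => starRingEnd ℂ (prodVec (a i) (b i) q))

/-!
Suppose `a ⊗ b` lies in the range of `σ` and `a ⊗ b̄` in the range of `σ^{T_B}`. Since the partial
transpose of `(a ⊗ b)(a ⊗ b)†` is `(a ⊗ b̄)(a ⊗ b̄)†`, subtracting `t (a ⊗ b)(a ⊗ b)†` for the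
largest `t` that keeps both `σ` and `σ^{T_B}` positive semidefinite lowers
`rank σ + rank σ^{T_B}`. For a single positive semidefinite `A` with `A u = v`, that largest `t` is
`1 / u†Au`: then `A - vv† / u†Au = Pᴴ A P` with `P = 1 - u v† / u†Au`, and it annihilates `u`.
Iterating until no such product vector is left writes `ρ` as a separable matrix plus an edge
matrix; the edge part is nonzero because `ρ` is entangled, and normalising both traces gives `p`.
-/

namespace Matrix

variable {ι 𝕜 : Type*} [Fintype ι] [RCLike 𝕜]

theorem rank_le_rank_of_ker_le {κ K : Type*} [Field K] {M N : Matrix κ ι K}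
    (h : LinearMap.ker M.mulVecLin ≤ LinearMap.ker N.mulVecLin) : N.rank ≤ M.rank := by
  have hM := LinearMap.finrank_range_add_finrank_ker M.mulVecLin
  have hN := LinearMap.finrank_range_add_finrank_ker N.mulVecLin
  have := Submodule.finrank_mono h
  unfold rank
  omega

theorem rank_lt_rank_of_ker_lt {κ K : Type*} [Field K] {M N : Matrix κ ι K}
    (h : LinearMap.ker M.mulVecLin < LinearMap.ker N.mulVecLin) : N.rank < M.rank := by
  have hM := LinearMap.finrank_range_add_finrank_ker M.mulVecLin
  have hN := LinearMap.finrank_range_add_finrank_ker N.mulVecLin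
  have := Submodule.finrank_lt_finrank_of_lt h
  unfold rank
  omega

theorem range_mulVecLin_smul {κ K : Type*} [Field K] (M : Matrix κ ι K) {c : K} (hc : c ≠ 0) :
    LinearMap.range (c • M).mulVecLin = LinearMap.range M.mulVecLin := by
  rw [show (c • M).mulVecLin = c • M.mulVecLin from LinearMap.ext (smul_mulVec c M),
    LinearMap.range_smul _ _ hc]

theorem IsHermitian.star_mulVec_dotProduct {A : Matrix ι ι 𝕜} (hA : A.IsHermitian)
    (u x : ι → 𝕜) : star (A *ᵥ u) ⬝ᵥ x = star u ⬝ᵥ A *ᵥ x := by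
  rw [star_mulVec, hA.eq, dotProduct_mulVec]

theorem IsHermitian.ker_le_ker_sub_smul_vecMulVec {A : Matrix ι ι 𝕜} (hA : A.IsHermitian)
    {v : ι → 𝕜} (hv : v ∈ LinearMap.range A.mulVecLin) (c : 𝕜) :
    LinearMap.ker A.mulVecLin ≤ LinearMap.ker (A - c • vecMulVec v (star v)).mulVecLin := by
  obtain ⟨u, rfl⟩ := hv
  intro x hx
  rw [LinearMap.mem_ker, mulVecLin_apply] at hx ⊢
  rw [sub_mulVec, smul_mulVec, vecMulVec_mulVec, mulVecLin_apply, hA.star_mulVec_dotProduct, hx]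
  simp

theorem IsHermitian.rank_sub_smul_vecMulVec_le {A : Matrix ι ι 𝕜} (hA : A.IsHermitian)
    {v : ι → 𝕜} (hv : v ∈ LinearMap.range A.mulVecLin) (c : 𝕜) :
    (A - c • vecMulVec v (star v)).rank ≤ A.rank :=
  rank_le_rank_of_ker_le (hA.ker_le_ker_sub_smul_vecMulVec hv c)

theorem IsHermitian.conjTranspose_mul_mul_eq_sub_smul_vecMulVec [DecidableEq ι]
    {A : Matrix ι ι 𝕜} (hA : A.IsHermitian) (u : ι → 𝕜) {t : ℝ}
    (ht : (t : 𝕜) * (star u ⬝ᵥ A *ᵥ u) = 1) :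
    (1 - (t : 𝕜) • vecMulVec u (star (A *ᵥ u)))ᴴ * A * (1 - (t : 𝕜) • vecMulVec u (star (A *ᵥ u)))
      = A - (t : 𝕜) • vecMulVec (A *ᵥ u) (star (A *ᵥ u)) := by
  set v := A *ᵥ u
  have hXA : vecMulVec v (star u) * A = vecMulVec v (star v) := by
    rw [vecMulVec_mul, ← hA.eq, ← star_mulVec]
  have hAY : A * vecMulVec u (star v) = vecMulVec v (star v) := mul_vecMulVec _ _ _
  have hVY : vecMulVec v (star v) * vecMulVec u (star v)
      = (star u ⬝ᵥ A *ᵥ u) • vecMulVec v (star v) := by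
    rw [vecMulVec_mul_vecMulVec, hA.star_mulVec_dotProduct, vecMulVec_smul]
  simp only [conjTranspose_sub, conjTranspose_one, conjTranspose_smul, conjTranspose_vecMulVec,
    star_star, RCLike.star_def, RCLike.conj_ofReal, sub_mul, mul_sub, one_mul, mul_one,
    smul_mul_assoc, mul_smul_comm, hXA, hAY]
  rw [hVY, smul_smul, ht, one_smul, sub_self, smul_zero, sub_zero]

theorem PosSemidef.exists_posSemidef_sub_smul_vecMulVec_rank_lt {A : Matrix ι ι 𝕜}
    (hA : A.PosSemidef) {v : ι → 𝕜} (hv : v ∈ LinearMap.range A.mulVecLin) (hv0 : v ≠ 0) :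
    ∃ t : ℝ, 0 < t ∧ (A - (t : 𝕜) • vecMulVec v (star v)).PosSemidef ∧
      (A - (t : 𝕜) • vecMulVec v (star v)).rank < A.rank := by
  classical
  have hker := hA.isHermitian.ker_le_ker_sub_smul_vecMulVec hv
  obtain ⟨u, rfl⟩ := hv
  rw [mulVecLin_apply] at hv0 ⊢
  obtain ⟨c, hc, hcu⟩ := RCLike.nonneg_iff_exists_ofReal.mp (hA.dotProduct_mulVec_nonneg u)
  have hc0 : c ≠ 0 := by
    rintro rfl
    exact hv0 ((hA.dotProduct_mulVec_zero_iff u).mp (by simpa using hcu.symm))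
  have ht : ((c⁻¹ : ℝ) : 𝕜) * (star u ⬝ᵥ A *ᵥ u) = 1 := by
    rw [← hcu, ← RCLike.ofReal_mul, inv_mul_cancel₀ hc0, RCLike.ofReal_one]
  refine ⟨c⁻¹, inv_pos.mpr (hc.lt_of_ne' hc0), ?_, rank_lt_rank_of_ker_lt ?_⟩
  · rw [← hA.isHermitian.conjTranspose_mul_mul_eq_sub_smul_vecMulVec u ht]
    exact hA.conjTranspose_mul_mul_same _
  · refine SetLike.lt_iff_le_and_exists.mpr ⟨hker _, u, ?_, by simpa using hv0⟩
    rw [LinearMap.mem_ker, mulVecLin_apply, sub_mulVec, smul_mulVec, vecMulVec_mulVec,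
      hA.isHermitian.star_mulVec_dotProduct, op_smul_eq_smul, smul_smul, ht, one_smul, sub_self]

theorem PosSemidef.sub_smul_vecMulVec_of_le {A : Matrix ι ι 𝕜} {v : ι → 𝕜} {s t : ℝ}
    (hA : (A - (t : 𝕜) • vecMulVec v (star v)).PosSemidef) (hs : s ≤ t) :
    (A - (s : 𝕜) • vecMulVec v (star v)).PosSemidef := by
  have h := hA.add ((posSemidef_vecMulVec_self_star v).smul (sub_nonneg.mpr hs))
  convert h using 1
  simp only [← RCLike.real_smul_eq_coe_smul (K := 𝕜), sub_smul]
  abel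

theorem PosSemidef.exists_sub_smul_vecMulVec_rank_add_lt {A B : Matrix ι ι 𝕜}
    (hA : A.PosSemidef) (hB : B.PosSemidef) {v w : ι → 𝕜}
    (hv : v ∈ LinearMap.range A.mulVecLin) (hv0 : v ≠ 0)
    (hw : w ∈ LinearMap.range B.mulVecLin) (hw0 : w ≠ 0) :
    ∃ t : ℝ, 0 < t ∧ (A - (t : 𝕜) • vecMulVec v (star v)).PosSemidef ∧
      (B - (t : 𝕜) • vecMulVec w (star w)).PosSemidef ∧
      (A - (t : 𝕜) • vecMulVec v (star v)).rank + (B - (t : 𝕜) • vecMulVec w (star w)).rank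
        < A.rank + B.rank := by
  obtain ⟨tA, htA, hA', hrA⟩ := hA.exists_posSemidef_sub_smul_vecMulVec_rank_lt hv hv0
  obtain ⟨tB, htB, hB', hrB⟩ := hB.exists_posSemidef_sub_smul_vecMulVec_rank_lt hw hw0
  rcases le_total tA tB with h | h
  · have := hB.isHermitian.rank_sub_smul_vecMulVec_le hw tA
    exact ⟨tA, htA, hA', hB'.sub_smul_vecMulVec_of_le h, by omega⟩
  · have := hA.isHermitian.rank_sub_smul_vecMulVec_le hv tB
    exact ⟨tB, htB, hA'.sub_smul_vecMulVec_of_le h, hB', by omega⟩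

end Matrix

theorem ptrans_sub (X Y : Matrix (Fin m × Fin n) (Fin m × Fin n) ℂ) :
    ptrans (X - Y) = ptrans X - ptrans Y := rfl

theorem ptrans_smul (c : ℂ) (X : Matrix (Fin m × Fin n) (Fin m × Fin n) ℂ) :
    ptrans (c • X) = c • ptrans X := rfl

theorem ptrans_vecMulVec_prodVec (a : Fin m → ℂ) (b : Fin n → ℂ) :
    ptrans (vecMulVec (prodVec a b) (star (prodVec a b)))
      = vecMulVec (prodVec a (star b)) (star (prodVec a (star b))) := by
  ext p q
  simp only [ptrans, vecMulVec_apply, prodVec, Pi.star_apply, star_mul', star_star]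
  ring

theorem prodVec_star_ne_zero {a : Fin m → ℂ} {b : Fin n → ℂ} (h : prodVec a b ≠ 0) :
    prodVec a (star b) ≠ 0 := by
  contrapose! h
  ext p
  simpa [prodVec] using congr_fun h p

namespace IsSeparableState

theorem zero : IsSeparableState (0 : Matrix (Fin m × Fin n) (Fin m × Fin n) ℂ) :=
  ⟨0, finZeroElim, finZeroElim, by simp⟩

theorem vecMulVec_prodVec (a : Fin m → ℂ) (b : Fin n → ℂ) :
    IsSeparableState (vecMulVec (prodVec a b) (star (prodVec a b))) :=
  ⟨1, fun _ => a, fun _ => b, by simp; rfl⟩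

theorem add {ρ σ : Matrix (Fin m × Fin n) (Fin m × Fin n) ℂ}
    (hρ : IsSeparableState ρ) (hσ : IsSeparableState σ) : IsSeparableState (ρ + σ) := by
  obtain ⟨k, a, b, rfl⟩ := hρ
  obtain ⟨l, c, d, rfl⟩ := hσ
  exact ⟨k + l, Fin.append a c, Fin.append b d, by simp [Fin.sum_univ_add]⟩

theorem smul {ρ : Matrix (Fin m × Fin n) (Fin m × Fin n) ℂ} (hρ : IsSeparableState ρ)
    {c : ℂ} (hc : 0 ≤ c) : IsSeparableState (c • ρ) := by
  obtain ⟨k, a, b, rfl⟩ := hρ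
  obtain ⟨r, hr, rfl⟩ := RCLike.nonneg_iff_exists_ofReal.mp hc
  rw [RCLike.ofReal_eq_complex_ofReal]
  refine ⟨k, fun i => (√r : ℂ) • a i, b, ?_⟩
  rw [Finset.smul_sum]
  refine Finset.sum_congr rfl fun i _ => ?_
  ext p q
  have hsq : (√r : ℂ) * (√r : ℂ) = r := by rw [← Complex.ofReal_mul, Real.mul_self_sqrt hr]
  simp only [Matrix.smul_apply, vecMulVec_apply, prodVec, Pi.smul_apply, smul_eq_mul, map_mul,
    Complex.conj_ofReal]
  rw [← hsq]
  ring

theorem posSemidef {ρ : Matrix (Fin m × Fin n) (Fin m × Fin n) ℂ} (hρ : IsSeparableState ρ) :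
    ρ.PosSemidef := by
  obtain ⟨k, a, b, rfl⟩ := hρ
  exact Finset.sum_induction _ PosSemidef (fun _ _ => .add) .zero
    fun i _ => posSemidef_vecMulVec_self_star _

theorem exists_eq_trace_smul [Nonempty (Fin m × Fin n)]
    {s : Matrix (Fin m × Fin n) (Fin m × Fin n) ℂ} (hs : IsSeparableState s) :
    ∃ σ, IsSeparableState σ ∧ σ.trace = 1 ∧ s = s.trace • σ := by
  by_cases hs0 : s.trace = 0
  · obtain ⟨i, j⟩ := ‹Nonempty (Fin m × Fin n)›.some
    refine ⟨_, vecMulVec_prodVec (Pi.single i 1) (Pi.single j 1), ?_, ?_⟩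
    · simp [trace_vecMulVec, dotProduct, prodVec, Pi.single_apply, Fintype.sum_prod_type,
        apply_ite]
    · rw [hs0, zero_smul, ← hs.posSemidef.trace_eq_zero_iff, hs0]
  · exact ⟨s.trace⁻¹ • s, hs.smul (inv_nonneg.mpr hs.posSemidef.trace_nonneg),
      by rw [trace_smul, smul_eq_mul, inv_mul_cancel₀ hs0], by rw [smul_inv_smul₀ hs0]⟩

end IsSeparableState

structure IsEdgeState (δ : Matrix (Fin m × Fin n) (Fin m × Fin n) ℂ) : Prop where
  posSemidef : δ.PosSemidef
  posSemidef_ptrans : (ptrans δ).PosSemidef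
  notMem_ranges : ∀ (a : Fin m → ℂ) (b : Fin n → ℂ), prodVec a b ≠ 0 →
    ¬ (prodVec a b ∈ LinearMap.range δ.mulVecLin ∧
        prodVec a (star b) ∈ LinearMap.range (ptrans δ).mulVecLin)

namespace IsEdgeState

theorem smul {δ : Matrix (Fin m × Fin n) (Fin m × Fin n) ℂ} (hδ : IsEdgeState δ)
    {c : ℂ} (hc : 0 < c) : IsEdgeState (c • δ) where
  posSemidef := hδ.posSemidef.smul hc.le
  posSemidef_ptrans := by rw [ptrans_smul]; exact hδ.posSemidef_ptrans.smul hc.le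
  notMem_ranges a b hab := by
    simpa only [ptrans_smul, range_mulVecLin_smul _ hc.ne'] using hδ.notMem_ranges a b hab

theorem exists_eq_trace_smul {e : Matrix (Fin m × Fin n) (Fin m × Fin n) ℂ}
    (he : IsEdgeState e) (he0 : e ≠ 0) :
    ∃ δ, IsEdgeState δ ∧ δ.trace = 1 ∧ e = e.trace • δ := by
  have htr : e.trace ≠ 0 := mt he.posSemidef.trace_eq_zero_iff.mp he0
  exact ⟨e.trace⁻¹ • e, he.smul (inv_pos.mpr (he.posSemidef.trace_nonneg.lt_of_ne' htr)),
    by rw [trace_smul, smul_eq_mul, inv_mul_cancel₀ htr], by rw [smul_inv_smul₀ htr]⟩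

end IsEdgeState

theorem exists_isSeparableState_add_isEdgeState {σ : Matrix (Fin m × Fin n) (Fin m × Fin n) ℂ}
    (hσ : σ.PosSemidef) (hσ' : (ptrans σ).PosSemidef) :
    ∃ s e, IsSeparableState s ∧ IsEdgeState e ∧ σ = s + e := by
  induction hN : σ.rank + (ptrans σ).rank using Nat.strong_induction_on generalizing σ with
  | _ N ih =>
  by_cases hprod : ∃ (a : Fin m → ℂ) (b : Fin n → ℂ), prodVec a b ≠ 0 ∧
      prodVec a b ∈ LinearMap.range σ.mulVecLin ∧
      prodVec a (star b) ∈ LinearMap.range (ptrans σ).mulVecLin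
  · obtain ⟨a, b, hab, hv, hw⟩ := hprod
    obtain ⟨t, ht, hA, hB, hrank⟩ := hσ.exists_sub_smul_vecMulVec_rank_add_lt hσ' hv hab hw
      (prodVec_star_ne_zero hab)
    rw [← ptrans_vecMulVec_prodVec, ← ptrans_smul, ← ptrans_sub] at hB hrank
    obtain ⟨s, e, hs, he, hσe⟩ := ih _ (hN ▸ hrank) hA hB rfl
    refine ⟨(t : ℂ) • vecMulVec (prodVec a b) (star (prodVec a b)) + s, e,
      ((IsSeparableState.vecMulVec_prodVec a b).smul (by exact_mod_cast ht.le)).add hs, he, ?_⟩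
    rw [add_assoc, ← hσe]
    exact (add_sub_cancel _ _).symm
  · exact ⟨0, σ, .zero, ⟨hσ, hσ', fun a b hab h => hprod ⟨a, b, hab, h⟩⟩, (zero_add σ).symm⟩

/-- Theorem 1(ii): every PPT entangled state decomposes as a convex
combination of a separable state and an edge state. -/
theorem ppt_entangled_decomposition (m n : ℕ)
    (ρ : Matrix (Fin m × Fin n) (Fin m × Fin n) ℂ)
    (htr : ρ.trace = 1) (hpos : ρ.PosSemidef) (hppt : (ptrans ρ).PosSemidef)
    (hent : ¬ IsSeparableState ρ) :
    ∃ (p : ℝ), 0 < p ∧ p ≤ 1 ∧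
      ∃ (ρsep δ : Matrix (Fin m × Fin n) (Fin m × Fin n) ℂ),
        IsSeparableState ρsep ∧ ρsep.trace = 1 ∧
        δ.trace = 1 ∧ δ.PosSemidef ∧ (ptrans δ).PosSemidef ∧
        (∀ (a : Fin m → ℂ) (b : Fin n → ℂ), prodVec a b ≠ 0 →
          ¬ (prodVec a b ∈ LinearMap.range δ.mulVecLin ∧
              prodVec a (fun j => starRingEnd ℂ (b j)) ∈
                LinearMap.range (ptrans δ).mulVecLin)) ∧
        ρ = ((1 : ℂ) - (p : ℂ)) • ρsep + (p : ℂ) • δ := by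
  have : Nonempty (Fin m × Fin n) := by
    by_contra h
    simp [not_nonempty_iff.mp h] at htr
  obtain ⟨s, e, hs, he, rfl⟩ := exists_isSeparableState_add_isEdgeState hpos hppt
  have he0 : e ≠ 0 := by rintro rfl; exact hent (by simpa using hs)
  obtain ⟨δ, hδ, hδtr, hδe⟩ := he.exists_eq_trace_smul he0
  obtain ⟨ρsep, hsep, hsep_tr, hs_eq⟩ := hs.exists_eq_trace_smul
  obtain ⟨p, hp, hpe⟩ := RCLike.pos_iff_exists_ofReal.mp
    (he.posSemidef.trace_nonneg.lt_of_ne' (mt he.posSemidef.trace_eq_zero_iff.mp he0))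
  rw [RCLike.ofReal_eq_complex_ofReal] at hpe
  have hstr : s.trace = 1 - p := by rw [← htr, trace_add, ← hpe, add_sub_cancel_right]
  have hp1 : p ≤ 1 := by
    have := hs.posSemidef.trace_nonneg
    rw [hstr] at this
    exact_mod_cast sub_nonneg.mp this
  refine ⟨p, hp, hp1, ρsep, δ, hsep, hsep_tr, hδtr, hδ.posSemidef, hδ.posSemidef_ptrans,
    hδ.notMem_ranges, ?_⟩
  rw [hs_eq, hstr, hδe, ← hpe]
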